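/- For any vector fields ξ_1, ..., ξ_k on ℝ^d with polynomial coefficients, the Hochschild–Kostant–Rosenberg cochain φ_HKR(ξ_1 ∧ ... ∧ ξ_k)(f_1,...,f_k) = (1/k!) Σ_{σ ∈ S_k} sgn(σ) ξ_1(f_{σ(1)})···ξ_k(f_{σ(k)}) is a Hochschild cocycle, i.e., its Hochschild differential vanishes. -/
import Mathlib


def hochDiff {A : Type*} [CommRing A] {k : ℕ} (Θ : (Fin k → A) → A) :
    (Fin (k + 1) → A) → A :=
  fun f =>
    f 0 * Θ (fun i => f i.succ) +
    (∑ i : Fin k, (-1 : A) ^ ((i : ℕ) + 1) *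
      Θ (fun j => if (j : ℕ) < (i : ℕ) then f j.castSucc
                  else if j = i then f i.castSucc * f i.succ
                  else f j.succ)) +
    (-1 : A) ^ (k + 1) * Θ (fun i => f i.castSucc) * f (Fin.last k)

/-- The HKR cochain attached to vector fields `ξ₁,…,ξ_k` on `ℝ^d` (with polynomial
coefficients):
`φ_HKR(ξ₁∧…∧ξ_k)(f₁,…,f_k) = (1/k!) Σ_{σ} sgn(σ) ξ₁(f_{σ(1)})⋯ξ_k(f_{σ(k)})`. -/
noncomputable def hkr {d k : ℕ}
    (ξ : Fin k → Derivation ℂ (MvPolynomial (Fin d) ℂ) (MvPolynomial (Fin d) ℂ)) :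
    (Fin k → MvPolynomial (Fin d) ℂ) → MvPolynomial (Fin d) ℂ :=
  fun f => ((k.factorial : ℂ)⁻¹) •
    ∑ σ : Equiv.Perm (Fin k), (Equiv.Perm.sign σ : ℤ) • ∏ i, ξ i (f (σ i))

theorem hochDiff_zero {A : Type*} [CommRing A] {k : ℕ} (Θ : (Fin k → A) → A)
    (h : ∀ (f : Fin k → A) (m : Fin k) (a b : A),
      Θ (Function.update f m (a * b)) =
        a * Θ (Function.update f m b) + b * Θ (Function.update f m a)) :
    ∀ f, hochDiff Θ f = 0 := by
  intro f
  set T : Fin (k+1) → A :=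
    fun m => Θ (fun j => if (j:ℕ) < (m:ℕ) then f j.castSucc else f j.succ) with hT
  set g : ℕ → A := fun m => if hm : m < k+1 then
      (-1:A)^(m+1) * (f ⟨m, hm⟩ * T ⟨m, hm⟩) else 0 with hg
  have hmid : ∀ i : Fin k,
      (-1 : A) ^ ((i : ℕ) + 1) *
        Θ (fun j => if (j : ℕ) < (i : ℕ) then f j.castSucc
                    else if j = i then f i.castSucc * f i.succ
                    else f j.succ)
      = g (i:ℕ) - g ((i:ℕ)+1) := by
    intro i
    set o : Fin k → A := fun j => if (j:ℕ) < (i:ℕ) then f j.castSucc else f j.succ with ho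
    have e1 : (fun j : Fin k => if (j : ℕ) < (i : ℕ) then f j.castSucc
                    else if j = i then f i.castSucc * f i.succ
                    else f j.succ)
        = Function.update o i (f i.castSucc * f i.succ) := by
      funext j
      rcases eq_or_ne j i with rfl | hne
      · rw [Function.update_self]; simp
      · rw [Function.update_of_ne hne]; simp [ho, hne]
    have e2 : Function.update o i (f i.succ) =
        (fun j : Fin k => if (j:ℕ) < (i.castSucc:ℕ) then f j.castSucc else f j.succ) := by
      funext j
      rcases eq_or_ne j i with rfl | hne
      · rw [Function.update_self]; simp
      · rw [Function.update_of_ne hne]; simp [ho, Fin.coe_castSucc]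
    have e3 : Function.update o i (f i.castSucc) =
        (fun j : Fin k => if (j:ℕ) < (i.succ:ℕ) then f j.castSucc else f j.succ) := by
      funext j
      rcases eq_or_ne j i with rfl | hne
      · rw [Function.update_self]; simp [Fin.val_succ]
      · have hj : (j:ℕ) ≠ (i:ℕ) := fun hc => hne (Fin.ext hc)
        rw [Function.update_of_ne hne]
        simp only [ho, Fin.val_succ]
        by_cases hlt : (j:ℕ) < (i:ℕ)
        · rw [if_pos hlt, if_pos (by omega)]
        · rw [if_neg hlt, if_neg (by omega)]
    rw [e1, h o i (f i.castSucc) (f i.succ), e2, e3]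
    have hic : T i.castSucc = Θ (fun j : Fin k => if (j:ℕ) < (i.castSucc:ℕ) then f j.castSucc else f j.succ) := rfl
    have his : T i.succ = Θ (fun j : Fin k => if (j:ℕ) < (i.succ:ℕ) then f j.castSucc else f j.succ) := rfl
    rw [← hic, ← his]
    have hg1 : g (i:ℕ) = (-1:A)^((i:ℕ)+1) * (f i.castSucc * T i.castSucc) := by
      simp only [hg]; rw [dif_pos (by omega : (i:ℕ) < k+1)]
      congr 1
    have hg2 : g ((i:ℕ)+1) = (-1:A)^((i:ℕ)+2) * (f i.succ * T i.succ) := by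
      simp only [hg]; rw [dif_pos (by omega : (i:ℕ)+1 < k+1)]
      congr 1
    rw [hg1, hg2]
    ring
  have htel : ∑ i : Fin k, (g (i:ℕ) - g ((i:ℕ)+1)) = g 0 - g k := by
    rw [Fin.sum_univ_eq_sum_range (fun m => g m - g (m+1)) k]
    exact Finset.sum_range_sub' g k
  have hg0 : g 0 = -(f 0 * Θ (fun i => f i.succ)) := by
    simp only [hg]; rw [dif_pos (by omega : 0 < k+1)]
    have h0 : (⟨0, by omega⟩ : Fin (k+1)) = 0 := Fin.ext (by simp)
    rw [h0]
    have : T 0 = Θ (fun i => f i.succ) := by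
      show Θ (fun j : Fin k => if (j:ℕ) < ((0 : Fin (k+1)):ℕ) then f j.castSucc else f j.succ)
        = Θ (fun i => f i.succ)
      exact congrArg Θ (funext fun j => by simp)
    rw [this]; ring
  have hgk : g k = (-1:A)^(k+1) * Θ (fun i => f i.castSucc) * f (Fin.last k) := by
    simp only [hg]; rw [dif_pos (by omega : k < k+1)]
    have hk : (⟨k, by omega⟩ : Fin (k+1)) = Fin.last k := rfl
    rw [hk]
    have : T (Fin.last k) = Θ (fun i => f i.castSucc) := by
      show Θ (fun j : Fin k => if (j:ℕ) < ((Fin.last k : Fin (k+1)):ℕ) then f j.castSucc else f j.succ)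
        = Θ (fun i => f i.castSucc)
      exact congrArg Θ (funext fun j => by simp [Fin.val_last, j.isLt])
    rw [this]
    ring
  unfold hochDiff
  rw [Finset.sum_congr rfl (fun i _ => hmid i), htel, hg0, hgk]
  ring

lemma hkr_update {d k : ℕ}
    (ξ : Fin k → Derivation ℂ (MvPolynomial (Fin d) ℂ) (MvPolynomial (Fin d) ℂ))
    (f : Fin k → MvPolynomial (Fin d) ℂ) (m : Fin k) (a b : MvPolynomial (Fin d) ℂ) :
    hkr ξ (Function.update f m (a*b))
      = a * hkr ξ (Function.update f m b) + b * hkr ξ (Function.update f m a) := by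
  simp only [hkr]
  have key : ∀ (c : MvPolynomial (Fin d) ℂ) (σ : Equiv.Perm (Fin k)),
      ∏ i, ξ i (Function.update f m c (σ i))
        = ξ (σ.symm m) c * ∏ i ∈ Finset.univ.erase (σ.symm m), ξ i (Function.update f m c (σ i)) := by
    intro c σ
    rw [← Finset.mul_prod_erase Finset.univ _ (Finset.mem_univ (σ.symm m))]
    rw [Equiv.apply_symm_apply, Function.update_self]
  have key2 : ∀ (c c' : MvPolynomial (Fin d) ℂ) (σ : Equiv.Perm (Fin k)),
      ∏ i ∈ Finset.univ.erase (σ.symm m), ξ i (Function.update f m c (σ i))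
        = ∏ i ∈ Finset.univ.erase (σ.symm m), ξ i (Function.update f m c' (σ i)) := by
    intro c c' σ
    refine Finset.prod_congr rfl fun i hi => ?_
    have hne : σ i ≠ m := by
      intro hσ
      exact (Finset.mem_erase.mp hi).1 (by rw [← hσ, Equiv.symm_apply_apply])
    rw [Function.update_of_ne hne, Function.update_of_ne hne]
  simp only [MvPolynomial.smul_eq_C_mul, zsmul_eq_mul]
  rw [Finset.mul_sum, Finset.mul_sum, Finset.mul_sum, Finset.mul_sum, Finset.mul_sum,
    ← Finset.sum_add_distrib]
  refine Finset.sum_congr rfl fun σ _ => ?_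
  rw [key (a*b) σ, key a σ, key b σ, key2 (a*b) a σ, key2 b a σ]
  rw [Derivation.leibniz]
  simp only [smul_eq_mul]
  ring

/-- The HKR cochain of any tuple of polynomial vector fields is a Hochschild cocycle. -/
theorem hkr_cocycle {d k : ℕ}
    (ξ : Fin k → Derivation ℂ (MvPolynomial (Fin d) ℂ) (MvPolynomial (Fin d) ℂ)) :
    ∀ f, hochDiff (hkr ξ) f = 0 :=
  hochDiff_zero (hkr ξ) (hkr_update ξ)
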